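/- arXiv:2506.23938 — 6 statements merged into one kernel-verified Lean document; each statement's English description precedes it below -/
import Mathlib

section
/- The discriminant of the trinomial f_t(x) = n x^{n+1} - (n+1) t x^n + 1 over a field of characteristic zero equals (-1)^{n/2} n^n (n+1)^{n+1} (1 - t^{n+1}) for n even. -/
open Polynomial Finset
set_option maxRecDepth 8000
set_option maxHeartbeats 1000000

lemma aux_eval_deriv {L : Type*} [CommRing L] {N : ℕ} (r : Fin N → L) (i : Fin N) :
    Polynomial.eval (r i) (Polynomial.derivative (∏ j, (Polynomial.X - Polynomial.C (r j)))) =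
      ∏ j ∈ Finset.univ.erase i, (r i - r j) := by
  rw [← Finset.mul_prod_erase Finset.univ _ (Finset.mem_univ i), derivative_mul,
    derivative_X_sub_C, one_mul]
  simp [eval_prod]

lemma aux_negprod {L : Type*} [CommRing L] {N : ℕ} (hN : Odd N) (g : Fin N → L) :
    (∏ i, -g i) = -∏ i, g i := by
  calc (∏ i, -g i) = ∏ i, (-1 : L) * g i :=
        Finset.prod_congr rfl fun i _ => (neg_one_mul _).symm
    _ = -∏ i, g i := by
        rw [Finset.prod_mul_distrib, Finset.prod_const, Finset.card_univ, Fintype.card_fin,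
          Odd.neg_one_pow hN, neg_one_mul]

lemma aux_pair {L : Type*} [CommRing L] {N : ℕ} (r : Fin N → L) :
    ∏ i, ∏ j ∈ Finset.univ.erase i, (r i - r j) =
      (-1 : L) ^ (∑ i : Fin N, (Finset.Ioi i).card) *
        ∏ i, (∏ j ∈ Finset.Ioi i, (r i - r j)) ^ 2 := by
  have herase : ∀ i : Fin N, Finset.univ.erase i = Finset.Iio i ∪ Finset.Ioi i := by
    intro i
    ext j
    simp only [Finset.mem_erase, Finset.mem_univ, and_true, Finset.mem_union, Finset.mem_Iio,
      Finset.mem_Ioi]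
    exact ⟨fun h => h.lt_or_gt, fun h => h.elim (fun h' => h'.ne) fun h' => h'.ne'⟩
  have hdisj : ∀ i : Fin N, Disjoint (Finset.Iio i) (Finset.Ioi i) := by
    intro i
    exact Finset.disjoint_left.mpr fun j hj hj' => absurd (Finset.mem_Ioi.mp hj')
      (not_lt_of_gt (Finset.mem_Iio.mp hj))
  have hswap : ∏ i, ∏ j ∈ Finset.Iio i, (r i - r j) =
      ∏ j, ∏ i ∈ Finset.Ioi j, (r i - r j) := by
    refine Finset.prod_comm' ?_
    intro x y
    simp
  calc ∏ i, ∏ j ∈ Finset.univ.erase i, (r i - r j)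
      = (∏ i, ∏ j ∈ Finset.Iio i, (r i - r j)) * ∏ i, ∏ j ∈ Finset.Ioi i, (r i - r j) := by
        rw [← Finset.prod_mul_distrib]
        refine Finset.prod_congr rfl fun i _ => ?_
        rw [herase i, Finset.prod_union (hdisj i)]
    _ = ((-1 : L) ^ (∑ i : Fin N, (Finset.Ioi i).card) *
          ∏ i, ∏ j ∈ Finset.Ioi i, (r i - r j)) * ∏ i, ∏ j ∈ Finset.Ioi i, (r i - r j) := by
        rw [hswap]
        congr 1
        rw [← Finset.prod_pow_eq_pow_sum, ← Finset.prod_mul_distrib]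
        refine Finset.prod_congr rfl fun j _ => ?_
        rw [← Finset.prod_const, ← Finset.prod_mul_distrib]
        refine Finset.prod_congr rfl fun i _ => ?_
        ring
    _ = (-1 : L) ^ (∑ i : Fin N, (Finset.Ioi i).card) *
          ∏ i, (∏ j ∈ Finset.Ioi i, (r i - r j)) ^ 2 := by
        rw [mul_assoc]
        congr 1
        rw [← Finset.prod_mul_distrib]
        exact Finset.prod_congr rfl fun i _ => (sq _).symm


/-- The discriminant of the trinomial `f_t(x) = n x^{n+1} - (n+1) t xⁿ + 1` over a field of
characteristic zero equals `(-1)^{n/2} nⁿ (n+1)^{n+1} (1 - t^{n+1})` for `n` even.  The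
discriminant is expressed via the roots `r i` of `f_t` in an algebraic closure as
`lc^{2(n+1)-2} ∏_{i<j} (r i - r j)²` with leading coefficient `lc = n`. -/
theorem stmt_0 (K : Type*) [Field K] [CharZero K] (n : ℕ) (hn : Even n) (hpos : 0 < n)
    (t : K) (r : Fin (n + 1) → AlgebraicClosure K)
    (hr : (C (n : K) * X ^ (n + 1) - C (((n + 1 : ℕ) : K) * t) * X ^ n + 1).map
        (algebraMap K (AlgebraicClosure K)) =
      C ((n : AlgebraicClosure K)) * ∏ i, (X - C (r i))) :
    ((n : AlgebraicClosure K)) ^ (2 * n) *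
        ∏ i, ∏ j ∈ Finset.Ioi i, (r i - r j) ^ 2 =
      algebraMap K (AlgebraicClosure K)
        ((-1) ^ (n / 2) * (n : K) ^ n * ((n : K) + 1) ^ (n + 1) * (1 - t ^ (n + 1))) := by
  classical
  obtain ⟨m, hm⟩ := hn
  set φ := algebraMap K (AlgebraicClosure K) with hφ
  set c : AlgebraicClosure K := (n : AlgebraicClosure K) with hc
  have hc0 : c ≠ 0 := by
    simpa [hc] using (Nat.cast_ne_zero (R := AlgebraicClosure K)).mpr hpos.ne'
  set t' : AlgebraicClosure K := φ t with ht'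
  -- push map through on the left of hr
  have hmap : (C (n : K) * X ^ (n + 1) - C (((n + 1 : ℕ) : K) * t) * X ^ n + 1).map φ
      = C c * X ^ (n + 1) - C ((c + 1) * t') * X ^ n + 1 := by
    simp only [Polynomial.map_add, Polynomial.map_sub, Polynomial.map_mul, Polynomial.map_pow,
      Polynomial.map_one, Polynomial.map_C, Polynomial.map_X, map_mul, map_natCast,
      Polynomial.map_natCast]
    simp only [hc, ht', C_mul, C_add, C_1, Polynomial.C_eq_natCast, Nat.cast_add, Nat.cast_one]
  rw [hmap] at hr
  -- evaluated factorization
  have heval : ∀ x : AlgebraicClosure K, c * x ^ (n + 1) - (c + 1) * t' * x ^ n + 1 = c * ∏ i, (x - r i) := by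
    intro x
    have h := congrArg (Polynomial.eval x) hr
    simpa [eval_prod] using h
  have hodd : Odd (n + 1) := Even.add_one ⟨m, hm⟩
  have hnegprod : ∀ g : Fin (n + 1) → AlgebraicClosure K, (∏ i, -g i) = -∏ i, g i :=
    fun g => aux_negprod hodd g
  -- product of roots
  have hR : c * ∏ i, r i = -1 := by
    have h0 := heval 0
    simp only [zero_pow (by omega : n + 1 ≠ 0), zero_pow (by omega : n ≠ 0), mul_zero, zero_sub,
      sub_zero, zero_add, hnegprod] at h0
    linear_combination h0
  -- product of (t' - root)
  have hT : c * ∏ i, (t' - r i) = 1 - t' ^ (n + 1) := by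
    have h := heval t'
    linear_combination -h
  -- relation between the two evaluations of the derivative at roots
  have h1 : ∀ i, Polynomial.eval (r i)
      (Polynomial.derivative (C c * X ^ (n + 1) - C ((c + 1) * t') * X ^ n + 1)) =
      c * ∏ j ∈ Finset.univ.erase i, (r i - r j) := by
    intro i
    have h := congrArg (fun p => Polynomial.eval (r i) (Polynomial.derivative p)) hr
    simp only [derivative_mul, derivative_C, zero_mul, zero_add, eval_mul, eval_C] at h
    rw [h, aux_eval_deriv]
  have h2 : ∀ i, Polynomial.eval (r i)
      (Polynomial.derivative (C c * X ^ (n + 1) - C ((c + 1) * t') * X ^ n + 1)) =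
      c * (c + 1) * (r i) ^ n - (c + 1) * t' * (c * (r i) ^ (n - 1)) := by
    intro i
    simp only [derivative_add, derivative_sub, derivative_mul, derivative_C, derivative_one,
      derivative_X_pow, eval_add, eval_sub, eval_mul, eval_pow, eval_C, eval_X, eval_natCast,
      zero_mul, mul_zero, add_zero, zero_add, Nat.add_sub_cancel, Nat.cast_add, Nat.cast_one,
      eval_one]
    rw [hc]
    ring
  have hprod : ∏ i, (c * (c + 1) * (r i) ^ n - (c + 1) * t' * (c * (r i) ^ (n - 1)))
      = ∏ i, (c * ∏ j ∈ Finset.univ.erase i, (r i - r j)) :=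
    Finset.prod_congr rfl fun i _ => (h2 i).symm.trans (h1 i)
  -- left side of hprod
  have hfac : ∀ x : AlgebraicClosure K,
      c * (c + 1) * x ^ n - (c + 1) * t' * (c * x ^ (n - 1)) =
        c * (c + 1) * (x ^ (n - 1) * (x - t')) := by
    intro x
    have hx : x ^ n = x ^ (n - 1) * x := by
      conv_lhs => rw [show n = (n - 1) + 1 by omega, pow_succ]
    rw [hx]; ring
  have hL : ∏ i, (c * (c + 1) * (r i) ^ n - (c + 1) * t' * (c * (r i) ^ (n - 1)))
      = (c * (c + 1)) ^ (n + 1) * ((∏ i, r i) ^ (n - 1) * ∏ i, (r i - t')) := by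
    calc ∏ i, (c * (c + 1) * (r i) ^ n - (c + 1) * t' * (c * (r i) ^ (n - 1)))
        = ∏ i, (c * (c + 1) * ((r i) ^ (n - 1) * (r i - t'))) :=
          Finset.prod_congr rfl fun i _ => hfac (r i)
      _ = _ := by
          rw [Finset.prod_mul_distrib, Finset.prod_const, Finset.card_univ, Fintype.card_fin,
            Finset.prod_mul_distrib, Finset.prod_pow]
  -- the sign from the pairing
  have hScard : (∑ i : Fin (n + 1), (Finset.Ioi i).card) = (n + 1) * m := by
    have h1 : (∑ i : Fin (n + 1), (Finset.Ioi i).card)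
        = ∑ i ∈ Finset.range (n + 1), (n + 1 - 1 - i) := by
      simp only [Fin.card_Ioi]
      exact Fin.sum_univ_eq_sum_range (fun i => n + 1 - 1 - i) (n + 1)
    rw [h1, Finset.sum_range_reflect (fun i => i) (n + 1), Finset.sum_range_id]
    have h2 : (n + 1) * (n + 1 - 1) = ((n + 1) * m) * 2 := by
      simp only [Nat.add_sub_cancel]
      rw [hm]; ring
    rw [h2, Nat.mul_div_cancel _ (by norm_num)]
  have hsign : (-1 : AlgebraicClosure K) ^ (∑ i : Fin (n + 1), (Finset.Ioi i).card)
      = (-1 : AlgebraicClosure K) ^ m := by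
    rw [hScard, pow_mul, (Odd.neg_one_pow hodd : (-1 : AlgebraicClosure K) ^ (n + 1) = -1)]
  -- right side of hprod
  have hRo : ∏ i, (c * ∏ j ∈ Finset.univ.erase i, (r i - r j))
      = c ^ (n + 1) * ((-1) ^ m * ∏ i, (∏ j ∈ Finset.Ioi i, (r i - r j)) ^ 2) := by
    rw [Finset.prod_mul_distrib, Finset.prod_const, Finset.card_univ, Fintype.card_fin,
      aux_pair, hsign]
  have hkey : (c * (c + 1)) ^ (n + 1) * ((∏ i, r i) ^ (n - 1) * ∏ i, (r i - t'))
      = c ^ (n + 1) * ((-1) ^ m * ∏ i, (∏ j ∈ Finset.Ioi i, (r i - r j)) ^ 2) :=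
    hL.symm.trans (hprod.trans hRo)
  have hTZ : ∏ i, (r i - t') = -∏ i, (t' - r i) := by
    calc ∏ i, (r i - t') = ∏ i, -(t' - r i) := Finset.prod_congr rfl fun i _ => by ring
      _ = -∏ i, (t' - r i) := hnegprod _
  rw [hTZ, mul_pow] at hkey
  have hE2 : c ^ (n - 1) * (∏ i, r i) ^ (n - 1) = -1 := by
    rw [← mul_pow, hR]
    exact (Odd.neg_one_pow ⟨m - 1, by omega⟩ :
      (-1 : AlgebraicClosure K) ^ (n - 1) = -1)
  have key : c ^ (n - 1) * (c ^ (n + 1) * (c + 1) ^ (n + 1) *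
        ((∏ i, r i) ^ (n - 1) * -∏ i, (t' - r i)))
      = c ^ (n - 1) * (c ^ (n + 1) *
        ((-1) ^ m * ∏ i, (∏ j ∈ Finset.Ioi i, (r i - r j)) ^ 2)) := by rw [hkey]
  have key2 : c ^ (n + 1) * (c + 1) ^ (n + 1) * (∏ i, (t' - r i))
      = c ^ (n - 1) * c ^ (n + 1) *
        ((-1) ^ m * ∏ i, (∏ j ∈ Finset.Ioi i, (r i - r j)) ^ 2) := by
    linear_combination key +
      (c ^ (n + 1) * (c + 1) ^ (n + 1) * ∏ i, (t' - r i)) * hE2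
  have hcc : c ^ (n - 1) * c ^ (n + 1) = c ^ (2 * n) := by
    rw [← pow_add]
    congr 1
    omega
  have hm1 : ((-1 : AlgebraicClosure K) ^ m) * ((-1 : AlgebraicClosure K) ^ m) = 1 := by
    rw [← mul_pow]
    norm_num
  have hRHS : φ ((-1) ^ (n / 2) * (n : K) ^ n * ((n : K) + 1) ^ (n + 1) * (1 - t ^ (n + 1)))
      = (-1) ^ m * c ^ n * (c + 1) ^ (n + 1) * (1 - t' ^ (n + 1)) := by
    have h2 : n / 2 = m := by omega
    rw [h2]
    simp only [map_mul, map_pow, map_sub, map_add, map_one, map_neg, map_natCast, hc, ht']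
  have hXX : ∏ i, ∏ j ∈ Finset.Ioi i, (r i - r j) ^ 2
      = ∏ i, (∏ j ∈ Finset.Ioi i, (r i - r j)) ^ 2 :=
    Finset.prod_congr rfl fun i _ => (Finset.prod_pow _ _ _)
  rw [hXX, hRHS]
  linear_combination (-(-1 : AlgebraicClosure K) ^ m) * key2 +
    ((-1 : AlgebraicClosure K) ^ m * c ^ n * (c + 1) ^ (n + 1)) * hT +
    (-(∏ i, (∏ j ∈ Finset.Ioi i, (r i - r j)) ^ 2)) * hcc +
    (-(c ^ (n - 1) * c ^ (n + 1)) * ∏ i, (∏ j ∈ Finset.Ioi i, (r i - r j)) ^ 2) * hm1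
end

section
/- Let n ≥ 2 be even and let A ∈ GL_n(Z) be the companion matrix of (X-1)^n. Then A is conjugate over Z to the upper triangular Jordan block with 1's on the diagonal and superdiagonal; in particular the order of A mod 2 is n if n is a power of 2, and 2^{⌊log_2 n⌋ + 1} otherwise. -/
open Matrix

/-- The companion matrix of `(X-1)^n`: `1`'s on the subdiagonal and last column
`(-Aₙ, …, -A₁)` where `(X-1)^n = Xⁿ + A₁X^{n-1} + ⋯ + Aₙ`, `Aᵢ = (-1)^i C(n,i)`. -/
def companionA (n : ℕ) : Matrix (Fin n) (Fin n) ℤ :=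
  Matrix.of fun i j =>
    if (j : ℕ) = n - 1 then -((-1 : ℤ) ^ (n - (i : ℕ)) * (n.choose (n - (i : ℕ)) : ℤ))
    else if (i : ℕ) = (j : ℕ) + 1 then 1 else 0

/-- The upper triangular Jordan block with `1`'s on the diagonal and superdiagonal. -/
def jordanOne (n : ℕ) : Matrix (Fin n) (Fin n) ℤ :=
  Matrix.of fun i j => if i = j then 1 else if (j : ℕ) = (i : ℕ) + 1 then 1 else 0

/-- The conjugating matrix `P`, with `p_{ij} = (-1)^{i+j} C(n-1-j, i)` (0-indexed). -/
def Pmat (n : ℕ) : Matrix (Fin n) (Fin n) ℤ :=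
  Matrix.of fun i j => (-1 : ℤ) ^ ((i : ℕ) + (j : ℕ)) * ((n - 1 - (j : ℕ)).choose (i : ℕ) : ℤ)

lemma neg_one_pow_sub (n i : ℕ) (hn : Even n) (hi : i ≤ n) :
    ((-1 : ℤ)) ^ (n - i) = (-1) ^ i := by
  have h1 : (-1 : ℤ) ^ (n - i) * (-1) ^ i = 1 := by
    rw [← pow_add, Nat.sub_add_cancel hi]
    exact Even.neg_one_pow hn
  have h2 : (-1 : ℤ) ^ i * (-1) ^ i = 1 := by
    rw [← pow_add]
    exact Even.neg_one_pow ⟨i, by ring⟩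
  calc (-1 : ℤ) ^ (n - i) = (-1) ^ (n - i) * ((-1) ^ i * (-1) ^ i) := by rw [h2, mul_one]
    _ = ((-1) ^ (n - i) * (-1) ^ i) * (-1) ^ i := by ring
    _ = (-1) ^ i := by rw [h1, one_mul]

/-- Auxiliary: the entries of `Pmat` as a function of naturals. -/
noncomputable def pent (n : ℕ) : ℕ → ℕ → ℤ :=
  fun i j => (-1 : ℤ) ^ (i + j) * ((n - 1 - j).choose i : ℤ)

lemma AP_eq_PJ (n : ℕ) (hn : Even n) (h2 : 2 ≤ n) :
    companionA n * Pmat n = Pmat n * jordanOne n := by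
  ext i j
  rw [mul_apply, mul_apply]
  have hL : ∑ k : Fin n, companionA n i k * Pmat n k j
      = (if 1 ≤ (i : ℕ) then pent n ((i : ℕ) - 1) (j : ℕ) else 0)
        + (-((-1 : ℤ) ^ (n - (i : ℕ)) * (n.choose (n - (i : ℕ)) : ℤ))) * pent n (n-1) (j : ℕ) := by
    have hsplit : ∀ k : Fin n, companionA n i k * Pmat n k j
        = (if (i : ℕ) = (k : ℕ) + 1 ∧ (k : ℕ) ≠ n - 1 then pent n (k : ℕ) (j : ℕ) else 0)
          + (if (k : ℕ) = n - 1 then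
              (-((-1 : ℤ) ^ (n - (i : ℕ)) * (n.choose (n - (i : ℕ)) : ℤ))) * pent n (k : ℕ) (j : ℕ)
             else 0) := by
      intro k
      simp only [companionA, Pmat, of_apply, pent]
      split_ifs with hA hB <;> (try push_neg at *) <;> simp_all
    rw [Finset.sum_congr rfl (fun k _ => hsplit k), Finset.sum_add_distrib]
    congr 1
    · rcases Nat.lt_or_ge 0 (i : ℕ) with hi | hi
      · have hmem : ((i : ℕ) - 1) < n := by omega
        rw [Finset.sum_eq_single (⟨(i:ℕ) - 1, hmem⟩ : Fin n)]
        · rw [if_pos, if_pos (by omega)]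
          simp only [Fin.val_mk]
          omega
        · intro b _ hb
          rw [if_neg]
          rintro ⟨h1, -⟩
          refine hb (Fin.ext ?_)
          simp only [Fin.val_mk]
          omega
        · intro h; exact absurd (Finset.mem_univ _) h
      · rw [Finset.sum_eq_zero, if_neg (by omega)]
        intro b _
        rw [if_neg (by omega)]
    · rw [Finset.sum_eq_single (⟨n - 1, by omega⟩ : Fin n)]
      · rw [if_pos (by simp)]
      · intro b _ hb
        rw [if_neg]
        intro hc
        refine hb (Fin.ext ?_)
        simp only [Fin.val_mk]
        omega
      · intro h; exact absurd (Finset.mem_univ _) h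
  have hR : ∑ k : Fin n, Pmat n i k * jordanOne n k j
      = pent n (i : ℕ) (j : ℕ) + (if 1 ≤ (j : ℕ) then pent n (i : ℕ) ((j : ℕ) - 1) else 0) := by
    have hsplit : ∀ k : Fin n, Pmat n i k * jordanOne n k j
        = (if k = j then pent n (i : ℕ) (k : ℕ) else 0)
          + (if (j : ℕ) = (k : ℕ) + 1 then pent n (i : ℕ) (k : ℕ) else 0) := by
      intro k
      simp only [Pmat, jordanOne, of_apply, pent]
      rcases eq_or_ne k j with h1 | h1
      · subst h1
        rw [if_pos rfl, if_pos rfl, if_neg (by omega), mul_one, add_zero]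
      · rcases eq_or_ne ((j : ℕ)) ((k : ℕ)+1) with hc | hc
        · rw [if_neg h1, if_pos hc, if_neg h1, if_pos hc, mul_one, zero_add]
        · rw [if_neg h1, if_neg hc, if_neg h1, if_neg hc, mul_zero, add_zero]
    rw [Finset.sum_congr rfl (fun k _ => hsplit k), Finset.sum_add_distrib]
    congr 1
    · rw [Finset.sum_eq_single j]
      · rw [if_pos rfl]
      · intro b _ hb; rw [if_neg hb]
      · intro h; exact absurd (Finset.mem_univ _) h
    · rcases Nat.lt_or_ge 0 (j : ℕ) with hj | hj
      · have hmem : ((j : ℕ) - 1) < n := by omega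
        rw [Finset.sum_eq_single (⟨(j:ℕ) - 1, hmem⟩ : Fin n)]
        · rw [if_pos, if_pos (by omega)]
          simp only [Fin.val_mk]
          omega
        · intro b _ hb
          rw [if_neg]
          intro hc
          refine hb (Fin.ext ?_)
          simp only [Fin.val_mk]
          omega
        · intro h; exact absurd (Finset.mem_univ _) h
      · rw [Finset.sum_eq_zero, if_neg (by omega)]
        intro b _
        rw [if_neg (by omega)]
  rw [hL, hR]
  have hi : (i : ℕ) < n := i.isLt
  have hj : (j : ℕ) < n := j.isLt
  generalize (i : ℕ) = a at hi ⊢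
  generalize (j : ℕ) = b at hj ⊢
  obtain ⟨m, rfl⟩ : ∃ m, n = m + 1 := ⟨n - 1, by omega⟩
  rcases Nat.eq_zero_or_pos b with rfl | hb
  · rw [if_neg (by omega : ¬ (1:ℕ) ≤ 0), add_zero]
    have hp : pent (m+1) (m+1-1) 0 = -1 := by
      simp only [pent, Nat.add_zero, Nat.sub_zero, Nat.add_sub_cancel, Nat.choose_self]
      have hmo : Odd m := Nat.not_even_iff_odd.mp (Nat.even_add_one.mp hn)
      rw [Odd.neg_one_pow hmo]
      simp
    rw [hp]
    rw [neg_one_pow_sub (m+1) a hn (by omega), Nat.choose_symm (by omega : a ≤ m+1)]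
    rcases Nat.eq_zero_or_pos a with rfl | ha
    · simp [pent]
    · obtain ⟨a', rfl⟩ : ∃ a', a = a' + 1 := ⟨a - 1, by omega⟩
      rw [if_pos (by omega)]
      simp only [pent, Nat.add_sub_cancel, Nat.add_zero, Nat.sub_zero]
      rw [Nat.choose_succ_succ (m) a']
      push_cast
      ring
  · obtain ⟨b', rfl⟩ : ∃ b', b = b' + 1 := ⟨b - 1, by omega⟩
    have hp : pent (m+1) (m+1-1) (b'+1) = 0 := by
      simp only [pent, Nat.add_sub_cancel]
      rw [Nat.choose_eq_zero_of_lt (by omega)]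
      simp
    rw [hp, mul_zero, add_zero, if_pos (by omega : (1:ℕ) ≤ b' + 1)]
    rcases Nat.eq_zero_or_pos a with rfl | ha
    · rw [if_neg (by omega : ¬ (1:ℕ) ≤ 0)]
      simp only [pent, Nat.choose_zero_right, Nat.zero_add, Nat.add_sub_cancel]
      push_cast
      ring
    · obtain ⟨a', rfl⟩ : ∃ a', a = a' + 1 := ⟨a - 1, by omega⟩
      rw [if_pos (by omega : (1:ℕ) ≤ a' + 1)]
      simp only [pent, Nat.add_sub_cancel]
      have h7 : m - b' = (m - (b'+1)) + 1 := by omega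
      rw [h7, Nat.choose_succ_succ (m - (b'+1)) a']
      push_cast
      ring

lemma isUnit_det_Pmat (n : ℕ) (hn : Even n) (h2 : 2 ≤ n) : IsUnit (Pmat n).det := by
  have key : ((Pmat n).submatrix (Fin.revPerm : Equiv.Perm (Fin n)) id).det = 1 := by
    rw [Matrix.det_of_lowerTriangular _ ?ht]
    case ht =>
      intro i j hij
      simp only [OrderDual.toDual_lt_toDual] at hij
      simp only [submatrix_apply, id_eq, Pmat, of_apply, Fin.revPerm_apply, Fin.val_rev]
      rw [Nat.choose_eq_zero_of_lt (by omega)]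
      simp
    have hdiag : ∀ i : Fin n, ((Pmat n).submatrix (Fin.revPerm : Equiv.Perm (Fin n)) id) i i = -1 := by
      intro i
      simp only [submatrix_apply, id_eq, Pmat, of_apply, Fin.revPerm_apply, Fin.val_rev]
      have h1 : n - 1 - (i : ℕ) = n - ((i : ℕ) + 1) := by omega
      rw [h1, Nat.choose_self]
      have h2' : n - ((i:ℕ) + 1) + (i : ℕ) = n - 1 := by omega
      rw [h2']
      have hmo : Odd (n - 1) := Nat.Even.sub_odd (by omega) hn odd_one
      rw [Odd.neg_one_pow hmo]
      simp
    rw [Finset.prod_congr rfl (fun i _ => hdiag i)]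
    rw [Finset.prod_const]
    simp only [Finset.card_univ, Fintype.card_fin]
    exact Even.neg_one_pow hn
  rw [Matrix.det_permute] at key
  exact IsUnit.of_mul_eq_one _ (by rw [mul_comm] at key; exact key)

/-- conjugation by a unit preserves order. -/
lemma orderOf_unit_conj {M : Type*} [Monoid M] (u : Mˣ) (a : M) :
    orderOf ((u : M) * a * ((u⁻¹ : Mˣ) : M)) = orderOf a := by
  let e : M ≃* M :=
    { toFun := fun x => (u : M) * x * ((u⁻¹ : Mˣ) : M)
      invFun := fun x => ((u⁻¹ : Mˣ) : M) * x * (u : M)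
      left_inv := fun x => by
        simp [mul_assoc, ← mul_assoc ((u⁻¹ : Mˣ) : M)]
      right_inv := fun x => by
        simp [mul_assoc, ← mul_assoc ((u : M))]
      map_mul' := fun x y => by
        calc (u : M) * (x * y) * ((u⁻¹ : Mˣ) : M)
            = ((u : M) * x * ((u⁻¹ : Mˣ) : M)) * ((u : M) * y * ((u⁻¹ : Mˣ) : M)) := by
              simp [mul_assoc] }
  exact orderOf_injective e.toMonoidHom e.injective a

/-- The nilpotent shift matrix over `ZMod 2`. -/
def Nmat (n : ℕ) : Matrix (Fin n) (Fin n) (ZMod 2) :=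
  Matrix.of fun i j => if (j : ℕ) = (i : ℕ) + 1 then 1 else 0

lemma Nmat_pow (n k : ℕ) :
    (Nmat n) ^ k = Matrix.of fun i j : Fin n => if (j : ℕ) = (i : ℕ) + k then 1 else 0 := by
  induction k with
  | zero =>
    ext i j
    simp only [pow_zero, of_apply, Nat.add_zero, one_apply]
    congr 1
    simp [Fin.ext_iff, eq_comm]
  | succ k ih =>
    rw [pow_succ, ih]
    ext i j
    rw [mul_apply]
    simp only [of_apply, Nmat]
    by_cases h : (i : ℕ) + k < n
    · rw [Finset.sum_eq_single ⟨(i : ℕ) + k, h⟩]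
      · simp [Nat.add_assoc]
      · intro b _ hb
        rw [if_neg, zero_mul]
        intro hb'
        exact hb (Fin.ext hb')
      · simp
    · rw [Finset.sum_eq_zero, if_neg (by omega)]
      intro b _
      rw [if_neg (by omega), zero_mul]

lemma jordan_map (n : ℕ) :
    (jordanOne n).map (Int.cast : ℤ → ZMod 2) = 1 + Nmat n := by
  ext i j
  simp only [map_apply, jordanOne, of_apply, Matrix.add_apply, one_apply, Nmat]
  split_ifs with h1 h2 h2 <;> simp_all <;> omega

lemma Nmat_pow_eq_zero (n k : ℕ) (h : n ≤ k) : (Nmat n) ^ k = 0 := by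
  rw [Nmat_pow]
  ext i j
  rw [of_apply, if_neg (by omega)]
  rfl

lemma Nmat_pow_ne_zero (n k : ℕ) (h2 : 0 < n) (h : k < n) : (Nmat n) ^ k ≠ 0 := by
  rw [Nmat_pow]
  intro hc
  have := congrFun (congrFun hc ⟨0, h2⟩) ⟨k, h⟩
  simp at this

lemma jordan_pow_two_pow (n m : ℕ) :
    ((1 : Matrix (Fin n) (Fin n) (ZMod 2)) + Nmat n) ^ (2 ^ m) = 1 + (Nmat n) ^ (2 ^ m) := by
  induction m with
  | zero => simp
  | succ m ih =>
    have h2 : (2:ℕ) ^ (m+1) = 2 ^ m * 2 := by ring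
    rw [h2, pow_mul, ih]
    have hself : ∀ X : Matrix (Fin n) (Fin n) (ZMod 2), X + X = 0 := by
      intro X
      ext i j
      simp only [Matrix.add_apply, Matrix.zero_apply]
      exact CharTwo.add_self_eq_zero _
    calc (1 + Nmat n ^ 2 ^ m) ^ 2
        = 1 + (Nmat n ^ 2 ^ m + Nmat n ^ 2 ^ m) + (Nmat n ^ 2 ^ m * Nmat n ^ 2 ^ m) := by
          rw [pow_two, add_mul, mul_add, mul_add, one_mul, mul_one]
          simp only [one_mul]
          abel
      _ = 1 + Nmat n ^ (2 ^ m * 2) := by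
          rw [hself, add_zero, ← pow_add]
          ring_nf

lemma orderOf_jordan_map (n k : ℕ) (h2 : 2 ≤ n) (h1 : n ≤ 2 ^ k) (hk : 2 ^ k < 2 * n) :
    orderOf ((jordanOne n).map (Int.cast : ℤ → ZMod 2)) = 2 ^ k := by
  rw [jordan_map]
  set B := (1 : Matrix (Fin n) (Fin n) (ZMod 2)) + Nmat n with hB
  have hBk : B ^ (2 ^ k) = 1 := by
    rw [jordan_pow_two_pow, Nmat_pow_eq_zero n _ h1, add_zero]
  have hdvd := orderOf_dvd_of_pow_eq_one hBk
  obtain ⟨t, ht, horder⟩ := (Nat.dvd_prime_pow Nat.prime_two).mp hdvd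
  rw [horder]
  congr 1
  by_contra hne
  have htk : t ≤ k - 1 := by omega
  have hk1 : 1 ≤ k := by
    rcases Nat.eq_zero_or_pos k with h | h
    · subst h; simp at h1; omega
    · exact h
  have : B ^ (2 ^ (k-1)) = 1 := by
    apply orderOf_dvd_iff_pow_eq_one.mp
    rw [horder]
    exact pow_dvd_pow 2 htk
  rw [jordan_pow_two_pow] at this
  have hlt : 2 ^ (k-1) < n := by
    have : 2 ^ k = 2 * 2 ^ (k-1) := by
      rw [← pow_succ']
      congr 1
      omega
    omega
  have hne0 := Nmat_pow_ne_zero n (2^(k-1)) (by omega) hlt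
  apply hne0
  have := congrArg (fun X => X - 1) this
  simpa using this

/-- For `n ≥ 2` even, the companion matrix `A` of `(X-1)^n` is conjugate over `ℤ` to the
Jordan block with `1`'s on the diagonal and superdiagonal; in particular the order of
`A mod 2` is `n` if `n` is a power of `2`, and `2^{⌊log₂ n⌋+1}` otherwise. -/
theorem stmt_4 (n : ℕ) (hn : Even n) (h2 : 2 ≤ n) :
    (∃ P : GL (Fin n) ℤ,
      ((P⁻¹ : GL (Fin n) ℤ) : Matrix (Fin n) (Fin n) ℤ) * companionA n *
        ((P : GL (Fin n) ℤ) : Matrix (Fin n) (Fin n) ℤ) = jordanOne n) ∧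
    ((∃ m, n = 2 ^ m) →
      orderOf ((companionA n).map (Int.cast : ℤ → ZMod 2)) = n) ∧
    (¬ (∃ m, n = 2 ^ m) →
      orderOf ((companionA n).map (Int.cast : ℤ → ZMod 2)) = 2 ^ (Nat.log 2 n + 1)) := by
  have hdet := isUnit_det_Pmat n hn h2
  let U : GL (Fin n) ℤ := Matrix.GeneralLinearGroup.mk'' (Pmat n) hdet
  have hU : (U : Matrix (Fin n) (Fin n) ℤ) = Pmat n := rfl
  have hconj : ((U⁻¹ : GL (Fin n) ℤ) : Matrix (Fin n) (Fin n) ℤ) * companionA n *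
      ((U : GL (Fin n) ℤ) : Matrix (Fin n) (Fin n) ℤ) = jordanOne n := by
    rw [mul_assoc, hU, AP_eq_PJ n hn h2, ← mul_assoc, ← hU]
    rw [show ((U⁻¹ : GL (Fin n) ℤ) : Matrix (Fin n) (Fin n) ℤ) *
        ((U : GL (Fin n) ℤ) : Matrix (Fin n) (Fin n) ℤ) = 1 from U.inv_mul, one_mul]
  have hA : companionA n = ((U : GL (Fin n) ℤ) : Matrix (Fin n) (Fin n) ℤ) * jordanOne n *
      ((U⁻¹ : GL (Fin n) ℤ) : Matrix (Fin n) (Fin n) ℤ) := by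
    rw [← hconj]
    have h1 : ((U : GL (Fin n) ℤ) : Matrix (Fin n) (Fin n) ℤ) *
        ((U⁻¹ : GL (Fin n) ℤ) : Matrix (Fin n) (Fin n) ℤ) = 1 := U.mul_inv
    calc companionA n = 1 * companionA n * 1 := by rw [one_mul, mul_one]
      _ = (↑U * ↑U⁻¹) * companionA n * (↑U * ↑U⁻¹) := by rw [h1]
      _ = ↑U * (↑U⁻¹ * companionA n * ↑U) * ↑U⁻¹ := by noncomm_ring
  -- transfer mod 2
  let f : Matrix (Fin n) (Fin n) ℤ →+* Matrix (Fin n) (Fin n) (ZMod 2) :=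
    (Int.castRingHom (ZMod 2)).mapMatrix
  let V : (Matrix (Fin n) (Fin n) (ZMod 2))ˣ := Units.map f.toMonoidHom U
  have hmap : (companionA n).map (Int.cast : ℤ → ZMod 2)
      = (V : Matrix (Fin n) (Fin n) (ZMod 2)) *
        ((jordanOne n).map (Int.cast : ℤ → ZMod 2)) *
        ((V⁻¹ : (Matrix (Fin n) (Fin n) (ZMod 2))ˣ) : Matrix (Fin n) (Fin n) (ZMod 2)) := by
    have h1 : (companionA n).map (Int.cast : ℤ → ZMod 2) = f (companionA n) := rfl
    have h2' : (jordanOne n).map (Int.cast : ℤ → ZMod 2) = f (jordanOne n) := rfl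
    have h3 : (V : Matrix (Fin n) (Fin n) (ZMod 2)) = f (U : Matrix (Fin n) (Fin n) ℤ) := rfl
    have h4 : ((V⁻¹ : (Matrix (Fin n) (Fin n) (ZMod 2))ˣ) : Matrix (Fin n) (Fin n) (ZMod 2))
        = f ((U⁻¹ : GL (Fin n) ℤ) : Matrix (Fin n) (Fin n) ℤ) := by
      have : V⁻¹ = Units.map f.toMonoidHom U⁻¹ := by
        rw [← map_inv]
      rw [this]
      rfl
    rw [h1, h2', h3, h4, hA, _root_.map_mul, _root_.map_mul]
  have horder : orderOf ((companionA n).map (Int.cast : ℤ → ZMod 2))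
      = orderOf ((jordanOne n).map (Int.cast : ℤ → ZMod 2)) := by
    rw [hmap]
    exact orderOf_unit_conj V _
  refine ⟨⟨U, hconj⟩, ?_, ?_⟩
  · rintro ⟨m, rfl⟩
    rw [horder, orderOf_jordan_map (2^m) m h2 le_rfl (by omega)]
  · intro hnp
    rw [horder, orderOf_jordan_map n (Nat.log 2 n + 1) h2
      (Nat.lt_pow_succ_log_self (by norm_num) n).le ?_]
    have hle : 2 ^ Nat.log 2 n ≤ n := Nat.pow_log_le_self 2 (by omega)
    have hne : 2 ^ Nat.log 2 n ≠ n := fun h => hnp ⟨Nat.log 2 n, h.symm⟩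
    rw [pow_succ]
    omega
end

section
/- Let N be an odd positive integer, λ a prime of Z[ζ_N]^+ above 2, and let Ā, B̄ ∈ SL_2(F_λ) be the reductions of the companion matrices A of (X-1)^2 and B of (X - ζ_N^{(N-1)/2})(X - ζ_N^{(N+1)/2}). Then Ā B̄ Ā^{-1} = B̄^{-1}, Ā has order 2, B̄ has order N, and the group generated by Ā and B̄ is the dihedral group of order 2N. -/
open Matrix

/-- In characteristic `2`, with `ζ` a primitive `N`-th root of unity (`N` odd), the reductions
`Ā` (companion of `(X-1)²`) and `B̄` (companion of `(X-ζ^{(N-1)/2})(X-ζ^{(N+1)/2})`) satisfy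
`Ā B̄ Ā⁻¹ = B̄⁻¹`, `Ā` has order `2`, `B̄` has order `N`, and together they generate a
dihedral group of order `2N`. -/
theorem stmt_5 (K : Type*) [Field K] (h2 : ringChar K = 2) (N : ℕ) (hN : Odd N) (hN1 : 1 < N)
    (ζ : K) (hζ : IsPrimitiveRoot ζ N)
    (A B : Matrix (Fin 2) (Fin 2) K)
    (hA : A = !![0, 1; 1, 0])
    (hB : B = !![0, 1; 1, ζ ^ ((N - 1) / 2) + ζ ^ ((N + 1) / 2)]) :
    A * B * A⁻¹ = B⁻¹ ∧ orderOf A = 2 ∧ orderOf B = N ∧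
    ∃ φ : DihedralGroup N →* Matrix (Fin 2) (Fin 2) K,
      Function.Injective φ ∧ φ (DihedralGroup.r 1) = B ∧ φ (DihedralGroup.sr 0) = A ∧
      Submonoid.closure {A, B} = MonoidHom.mrange φ := by
  haveI : NeZero N := ⟨by omega⟩
  haveI : Fact (1 < N) := ⟨hN1⟩
  obtain ⟨k, hk⟩ := hN
  have hk1 : (N - 1) / 2 = k := by omega
  have hk2 : (N + 1) / 2 = k + 1 := by omega
  set α : K := ζ ^ k with hα
  set β : K := ζ ^ (k + 1) with hβ
  rw [hk1, hk2] at hB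
  set t : K := α + β with htt
  -- characteristic two facts
  have hchar : (2 : K) = 0 := by
    have := ringChar.Nat.cast_ringChar (R := K)
    rw [h2] at this; exact_mod_cast this
  have hadd : ∀ x : K, x + x = 0 := fun x => by
    rw [← two_mul, hchar, zero_mul]
  have hneg1 : (-1 : K) = 1 := neg_eq_of_add_eq_zero_left (hadd 1)
  -- root of unity facts
  have hαβ : α * β = 1 := by
    rw [hα, hβ, ← pow_add]
    have : k + (k + 1) = N := by omega
    rw [this, hζ.pow_eq_one]
  have hζ1 : ζ ≠ 1 := by
    have := hζ.pow_ne_one_of_pos_of_lt (l := 1) one_ne_zero hN1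
    simpa using this
  have hα0 : α ≠ 0 := fun h => by simp [h] at hαβ
  have ht0 : t ≠ 0 := by
    intro h
    have hfac : α * (1 + ζ) = 0 := by
      rw [htt, hβ, pow_succ] at h
      rw [mul_add, mul_one, hα]; exact h
    rcases mul_eq_zero.mp hfac with h' | h'
    · exact hα0 h'
    · exact hζ1 (by rw [eq_neg_of_add_eq_zero_right h', hneg1])
  -- basic matrix identities
  set C : Matrix (Fin 2) (Fin 2) K := !![t, 1; 1, 0] with hC
  have hAA : A * A = 1 := by
    subst hA
    ext i j
    fin_cases i <;> fin_cases j <;> simp [Matrix.mul_apply, Fin.sum_univ_two, Matrix.one_apply]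
  have hBC : B * C = 1 := by
    rw [hB, hC]
    ext i j
    fin_cases i <;> fin_cases j <;>
      simp [Matrix.mul_apply, Fin.sum_univ_two, Matrix.one_apply] <;>
      linear_combination hadd t
  have hCB : C * B = 1 := by
    rw [hB, hC]
    ext i j
    fin_cases i <;> fin_cases j <;>
      simp [Matrix.mul_apply, Fin.sum_univ_two, Matrix.one_apply] <;>
      linear_combination hadd t
  have hAinv : A⁻¹ = A := Matrix.inv_eq_right_inv hAA
  have hBinv : B⁻¹ = C := Matrix.inv_eq_right_inv hBC
  have hABA : A * B * A = C := by
    rw [hA, hB, hC]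
    ext i j
    fin_cases i <;> fin_cases j <;>
      simp [Matrix.mul_apply, Fin.sum_univ_two]
  have part1 : A * B * A⁻¹ = B⁻¹ := by rw [hAinv, hABA, hBinv]
  -- order of A
  have hA1 : A ≠ 1 := by
    intro h
    have := congrFun (congrFun h.symm 0) 0
    rw [hA] at this
    simp [Matrix.one_apply] at this
  haveI : Fact (Nat.Prime 2) := ⟨Nat.prime_two⟩
  have part2 : orderOf A = 2 := orderOf_eq_prime (by rw [pow_two, hAA]) hA1
  -- diagonalization of B
  set P : Matrix (Fin 2) (Fin 2) K := !![1, α; 1, β] with hP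
  set D : Matrix (Fin 2) (Fin 2) K := !![α, 0; 0, β] with hD
  have hPB : P * B = D * P := by
    rw [hP, hB, hD]
    ext i j
    fin_cases i <;> fin_cases j <;>
      simp [Matrix.mul_apply, Fin.sum_univ_two] <;> ring_nf <;>
      linear_combination hαβ + hadd 1
  have hPdet : IsUnit P.det := by
    rw [hP]
    simp [Matrix.det_fin_two_of]
    intro h
    apply ht0
    rw [htt]
    have : β = α := by linear_combination h
    rw [this]; exact hadd α
  haveI := P.invertibleOfIsUnitDet hPdet
  have hPBk : ∀ m : ℕ, P * B ^ m = D ^ m * P := by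
    intro m
    induction m with
    | zero => simp
    | succ n ih =>
      rw [pow_succ, pow_succ, ← mul_assoc, ih, mul_assoc, hPB, ← mul_assoc]
  have hDk : ∀ m : ℕ, D ^ m = !![α ^ m, 0; 0, β ^ m] := by
    intro m
    induction m with
    | zero =>
      ext i j
      fin_cases i <;> fin_cases j <;> simp [Matrix.one_apply]
    | succ n ih =>
      rw [pow_succ, ih, hD, pow_succ, pow_succ]
      ext i j
      fin_cases i <;> fin_cases j <;> simp [Matrix.mul_apply, Fin.sum_univ_two]
  have hBD : ∀ m : ℕ, B ^ m = 1 ↔ D ^ m = 1 := by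
    intro m
    constructor
    · intro h
      have h1 : D ^ m * P = P := by rw [← hPBk, h, mul_one]
      calc D ^ m = D ^ m * P * ⅟P := by rw [mul_assoc, mul_invOf_self, mul_one]
        _ = P * ⅟P := by rw [h1]
        _ = 1 := mul_invOf_self P
    · intro h
      have h1 : P * B ^ m = P := by rw [hPBk, h, one_mul]
      calc B ^ m = ⅟P * (P * B ^ m) := by rw [← mul_assoc, invOf_mul_self, one_mul]
        _ = ⅟P * P := by rw [h1]
        _ = 1 := invOf_mul_self P
  have hBN : B ^ N = 1 := by
    rw [hBD, hDk]
    have h1 : α ^ N = 1 := by rw [hα, ← pow_mul, mul_comm, pow_mul, hζ.pow_eq_one, one_pow]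
    have h2 : β ^ N = 1 := by rw [hβ, ← pow_mul, mul_comm, pow_mul, hζ.pow_eq_one, one_pow]
    rw [h1, h2]
    ext i j
    fin_cases i <;> fin_cases j <;> simp [Matrix.one_apply]
  -- α is a primitive N-th root
  have hkcop : Nat.Coprime k N := by
    have h1 := Nat.gcd_dvd_left k N
    have h2 := Nat.gcd_dvd_right k N
    have h3 : Nat.gcd k N ∣ 1 := by
      have : Nat.gcd k N ∣ 2 * k := Dvd.dvd.mul_left h1 2
      have h4 : Nat.gcd k N ∣ N - 2 * k := Nat.dvd_sub h2 this
      have : N - 2 * k = 1 := by omega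
      rwa [this] at h4
    exact Nat.dvd_one.mp h3
  have hαprim : IsPrimitiveRoot α N := hζ.pow_of_coprime k hkcop
  -- order of B
  have part3 : orderOf B = N := by
    apply Nat.dvd_antisymm (orderOf_dvd_of_pow_eq_one hBN)
    have h1 : B ^ orderOf B = 1 := pow_orderOf_eq_one B
    rw [hBD, hDk] at h1
    have h2 : α ^ orderOf B = 1 := by
      have := congrFun (congrFun h1 0) 0
      simpa [Matrix.one_apply] using this
    exact hαprim.dvd_of_pow_eq_one _ h2
  -- B as a unit, and power congruences
  set u : (Matrix (Fin 2) (Fin 2) K)ˣ := ⟨B, C, hBC, hCB⟩ with hu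
  have horderu : orderOf u = N := by rw [← part3, ← orderOf_units]
  have hBmn : ∀ m n : ℕ, B ^ m = B ^ n ↔ m ≡ n [MOD N] := by
    intro m n
    have : B ^ m = B ^ n ↔ u ^ m = u ^ n := by
      constructor
      · intro h
        exact Units.ext (by simpa [Units.val_pow_eq_pow_val] using h)
      · intro h
        have := congrArg Units.val h
        simpa [Units.val_pow_eq_pow_val] using this
    rw [this, pow_eq_pow_iff_modEq, horderu]
  have hmodcast : ∀ m n : ℕ, ((m : ZMod N) = (n : ZMod N)) → B ^ m = B ^ n := by
    intro m n h
    exact (hBmn m n).mpr ((ZMod.natCast_eq_natCast_iff m n N).mp h)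
  have hvalcast : ∀ i : ZMod N, ((i.val : ZMod N)) = i := fun i => ZMod.natCast_rightInverse i
  -- additivity of i ↦ B ^ i.val
  have hpow : ∀ a b : ZMod N, B ^ a.val * B ^ b.val = B ^ (a + b).val := by
    intro a b
    rw [← pow_add]
    apply hmodcast
    push_cast [hvalcast]
    rfl
  -- the conjugation relation
  have hCeq : C = B ^ (N - 1) := by
    have hBpow : B * B ^ (N - 1) = 1 := by
      have : B * B ^ (N - 1) = B ^ N := by
        rw [← pow_succ']
        congr 1
        omega
      rw [this, hBN]
    calc C = C * (B * B ^ (N - 1)) := by rw [hBpow, mul_one]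
      _ = (C * B) * B ^ (N - 1) := by rw [mul_assoc]
      _ = B ^ (N - 1) := by rw [hCB, one_mul]
  have hBA : B * A = A * B ^ (N - 1) := by
    calc B * A = (A * A) * B * A := by rw [hAA, one_mul]
      _ = A * (A * B * A) := by rw [mul_assoc A A B, mul_assoc A (A * B) A]
      _ = A * C := by rw [hABA]
      _ = A * B ^ (N - 1) := by rw [hCeq]
  have hBkA : ∀ v : ℕ, B ^ v * A = A * B ^ ((N - 1) * v) := by
    intro v
    induction v with
    | zero => simp
    | succ n ih =>
      calc B ^ (n + 1) * A = B ^ n * (B * A) := by rw [pow_succ, mul_assoc]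
        _ = B ^ n * A * B ^ (N - 1) := by rw [hBA, ← mul_assoc]
        _ = A * B ^ ((N - 1) * n) * B ^ (N - 1) := by rw [ih]
        _ = A * B ^ ((N - 1) * n + (N - 1)) := by rw [mul_assoc, ← pow_add]
        _ = A * B ^ ((N - 1) * (n + 1)) := by ring_nf
  have hconj : ∀ i : ZMod N, B ^ i.val * A = A * B ^ (-i).val := by
    intro i
    rw [hBkA]
    congr 1
    apply hmodcast
    push_cast [hvalcast]
    have : ((N - 1 : ℕ) : ZMod N) = -1 := by
      push_cast [Nat.cast_sub (by omega : 1 ≤ N)]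
      simp
    rw [this]
    ring
  -- A is not a power of B
  have hABne : A * B ≠ B * A := by
    intro h
    apply ht0
    rw [hA, hB] at h
    have := congrFun (congrFun h 0) 1
    simpa [Matrix.mul_apply, Fin.sum_univ_two, htt] using this
  have hAnotpow : ∀ i j : ZMod N, B ^ i.val ≠ A * B ^ j.val := by
    intro i j h
    have hcanc : B ^ j.val * B ^ ((N - 1) * j.val) = 1 := by
      rw [← pow_add]
      have : B ^ (j.val + (N - 1) * j.val) = B ^ 0 := by
        apply hmodcast
        push_cast [Nat.cast_sub (by omega : 1 ≤ N)]
        ring_nf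
        simp
      rw [this, pow_zero]
    have hA' : A = B ^ (i.val + (N - 1) * j.val) := by
      calc A = A * (B ^ j.val * B ^ ((N - 1) * j.val)) := by rw [hcanc, mul_one]
        _ = (A * B ^ j.val) * B ^ ((N - 1) * j.val) := by rw [mul_assoc]
        _ = B ^ i.val * B ^ ((N - 1) * j.val) := by rw [← h]
        _ = B ^ (i.val + (N - 1) * j.val) := by rw [← pow_add]
    apply hABne
    rw [hA', ← pow_succ, ← pow_succ']
  have hBinj : ∀ i j : ZMod N, B ^ i.val = B ^ j.val → i = j := by
    intro i j h
    have := (hBmn _ _).mp h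
    have hv : i.val = j.val := by
      rw [Nat.ModEq] at this
      rwa [Nat.mod_eq_of_lt (ZMod.val_lt i), Nat.mod_eq_of_lt (ZMod.val_lt j)] at this
    exact ZMod.val_injective N hv
  -- the homomorphism
  set φ : DihedralGroup N →* Matrix (Fin 2) (Fin 2) K :=
    { toFun := fun g => match g with
        | .r i => B ^ i.val
        | .sr i => A * B ^ i.val
      map_one' := by
        show B ^ (0 : ZMod N).val = 1
        simp [ZMod.val_zero]
      map_mul' := by
        rintro (i | i) (j | j)
        · show B ^ (i + j).val = B ^ i.val * B ^ j.val
          rw [hpow]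
        · show A * B ^ (j - i).val = B ^ i.val * (A * B ^ j.val)
          rw [← mul_assoc, hconj, mul_assoc, hpow]
          congr 2
          ring
        · show A * B ^ (i + j).val = (A * B ^ i.val) * B ^ j.val
          rw [mul_assoc, hpow]
        · show B ^ (j - i).val = (A * B ^ i.val) * (A * B ^ j.val)
          calc B ^ (j - i).val = B ^ (-i + j).val := by ring_nf
            _ = B ^ (-i).val * B ^ j.val := (hpow _ _).symm
            _ = (A * A) * B ^ (-i).val * B ^ j.val := by rw [hAA, one_mul]
            _ = A * (A * B ^ (-i).val) * B ^ j.val := by rw [mul_assoc A A _]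
            _ = A * (B ^ i.val * A) * B ^ j.val := by rw [hconj]
            _ = (A * B ^ i.val) * (A * B ^ j.val) := by
                rw [← mul_assoc, ← mul_assoc] } with hφ
  refine ⟨part1, part2, part3, φ, ?_, ?_, ?_, ?_⟩
  · -- injectivity
    rintro (i | i) (j | j) h
    · exact congrArg DihedralGroup.r (hBinj i j h)
    · exact absurd h (hAnotpow i j)
    · exact absurd h.symm (hAnotpow j i)
    · refine congrArg DihedralGroup.sr (hBinj i j ?_)
      have : (A * A) * B ^ i.val = (A * A) * B ^ j.val := by
        rw [mul_assoc, mul_assoc]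
        exact congrArg (A * ·) h
      rwa [hAA, one_mul, one_mul] at this
  · show B ^ (1 : ZMod N).val = B
    rw [ZMod.val_one, pow_one]
  · show A * B ^ (0 : ZMod N).val = A
    simp [ZMod.val_zero]
  · apply le_antisymm
    · rw [Submonoid.closure_le]
      have h1 : A ∈ MonoidHom.mrange φ :=
        ⟨.sr 0, by show A * B ^ (0 : ZMod N).val = A; simp [ZMod.val_zero]⟩
      have h2 : B ∈ MonoidHom.mrange φ :=
        ⟨.r 1, by show B ^ (1 : ZMod N).val = B; rw [ZMod.val_one, pow_one]⟩
      rintro x (rfl | rfl) <;> assumption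
    · rintro x ⟨g, rfl⟩
      have hAmem : A ∈ Submonoid.closure {A, B} :=
        Submonoid.subset_closure (Set.mem_insert _ _)
      have hBmem : B ∈ Submonoid.closure {A, B} :=
        Submonoid.subset_closure (Set.mem_insert_of_mem _ rfl)
      rcases g with i | i
      · exact pow_mem hBmem _
      · exact mul_mem hAmem (pow_mem hBmem _)
end

section
/- The derivative of Q_t(x) = x^5 + 10x^4 + 35x^3 + 50x^2 + 25x + 4 - 4t^{-5} factors as Q_t'(x) = 5(x^2 + 3x + 1)(x^2 + 5x + 5), and Q_t takes the value 4(1 - t^{-5}) at both roots of x^2 + 5x + 5 and the value -4 t^{-5} at both roots of x^2 + 3x + 1. -/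
open Polynomial

/-- `Q_t' (x) = 5(x²+3x+1)(x²+5x+5)`, and `Q_t` takes the value `4(1-t^{-5})` at both roots of
`x²+5x+5` and the value `-4t^{-5}` at both roots of `x²+3x+1` (in any field extension). -/
theorem stmt_12 (K : Type*) [Field K] [CharZero K] (t : K) (ht : t ≠ 0)
    (Q : Polynomial K)
    (hQ : Q = X ^ 5 + C 10 * X ^ 4 + C 35 * X ^ 3 + C 50 * X ^ 2 + C 25 * X
      + C (4 - 4 * (t ^ 5)⁻¹)) :
    derivative Q = C 5 * (X ^ 2 + C 3 * X + 1) * (X ^ 2 + C 5 * X + C 5) ∧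
    (∀ (L : Type*) [Field L] (f : K →+* L),
      (∀ α : L, α ^ 2 + 5 * α + 5 = 0 → (Q.map f).eval α = f (4 * (1 - (t ^ 5)⁻¹))) ∧
      (∀ β : L, β ^ 2 + 3 * β + 1 = 0 → (Q.map f).eval β = f (-4 * (t ^ 5)⁻¹))) := by
  subst hQ
  constructor
  · simp only [derivative_add, derivative_mul, derivative_C, derivative_X_pow, derivative_X,
      show (10:K)=((10:ℕ):K) by norm_num, show (35:K)=((35:ℕ):K) by norm_num,
      show (50:K)=((50:ℕ):K) by norm_num, show (25:K)=((25:ℕ):K) by norm_num,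
      show (5:K)=((5:ℕ):K) by norm_num, show (3:K)=((3:ℕ):K) by norm_num,
      C_eq_natCast, derivative_natCast]
    push_cast
    ring
  · intro L _ f
    have hev : ∀ x : L, ((X ^ 5 + C 10 * X ^ 4 + C 35 * X ^ 3 + C 50 * X ^ 2 + C 25 * X
        + C (4 - 4 * (t ^ 5)⁻¹) : Polynomial K).map f).eval x
        = x ^ 5 + 10 * x ^ 4 + 35 * x ^ 3 + 50 * x ^ 2 + 25 * x + f (4 - 4 * (t ^ 5)⁻¹) := by
      intro x
      simp [Polynomial.map_add, Polynomial.map_mul, map_ofNat]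
    constructor
    · intro α hα
      rw [hev]
      have : f (4 - 4 * (t ^ 5)⁻¹) = f (4 * (1 - (t ^ 5)⁻¹)) := by ring_nf
      rw [this]
      linear_combination (α ^ 3 + 5 * α ^ 2 + 5 * α) * hα
    · intro β hβ
      rw [hev]
      have : f (4 - 4 * (t ^ 5)⁻¹) = f (-4 * (t ^ 5)⁻¹) + 4 := by
        rw [← map_ofNat f 4, ← map_add]; ring_nf
      rw [this]
      linear_combination (β ^ 3 + 7 * β ^ 2 + 13 * β + 4) * hβ
end

section
/- Let t be real with 0 < t < 1 (so t^{-5} > 1). Then the quintic Q_t(x) = x^5 + 10x^4 + 35x^3 + 50x^2 + 25x + 4 - 4t^{-5} has exactly one real root; consequently, if Q_t is irreducible over a real subfield K with Galois group a transitive solvable subgroup of S_5 of order divisible by 5 containing an element of cycle type (2,2), that Galois group contains complex conjugation acting as a product of two transpositions. -/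
open Polynomial

lemma aux_unique_root (c : ℝ) (hc : c < 0) :
    ∃! x : ℝ, x ^ 5 + 10 * x ^ 4 + 35 * x ^ 3 + 50 * x ^ 2 + 25 * x + c = 0 := by
  have hcont : Continuous (fun x : ℝ => x ^ 5 + 10 * x ^ 4 + 35 * x ^ 3 + 50 * x ^ 2 + 25 * x + c) := by
    fun_prop
  have h0 : (fun x : ℝ => x ^ 5 + 10 * x ^ 4 + 35 * x ^ 3 + 50 * x ^ 2 + 25 * x + c) 0 < 0 := by
    simpa using hc
  have hpos : 0 < (fun x : ℝ => x ^ 5 + 10 * x ^ 4 + 35 * x ^ 3 + 50 * x ^ 2 + 25 * x + c) (-c) := by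
    simp only
    nlinarith [pow_pos (neg_pos.2 hc) 5, pow_pos (neg_pos.2 hc) 4, pow_pos (neg_pos.2 hc) 3,
      pow_pos (neg_pos.2 hc) 2, neg_pos.2 hc]
  have hsub := intermediate_value_Icc (by linarith : (0:ℝ) ≤ -c) hcont.continuousOn
  obtain ⟨x, -, hx⟩ := hsub ⟨h0.le, hpos.le⟩
  have hrpos : ∀ y : ℝ, y ^ 5 + 10 * y ^ 4 + 35 * y ^ 3 + 50 * y ^ 2 + 25 * y + c = 0 → 0 < y := by
    intro y hy
    by_contra h
    push_neg at h
    nlinarith [sq_nonneg (y ^ 2 + 5 * y + 5),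
      mul_nonneg (neg_nonneg.2 h) (sq_nonneg (y ^ 2 + 5 * y + 5))]
  refine ⟨x, hx, ?_⟩
  intro b hb
  have hxr : x ^ 5 + 10 * x ^ 4 + 35 * x ^ 3 + 50 * x ^ 2 + 25 * x + c = 0 := hx
  have hbp := hrpos b hb
  have hxp := hrpos x hxr
  rcases lt_trichotomy b x with h | h | h
  · exfalso
    have h5 : b ^ 5 < x ^ 5 := pow_lt_pow_left₀ h hbp.le (by norm_num)
    have h4 : b ^ 4 < x ^ 4 := pow_lt_pow_left₀ h hbp.le (by norm_num)
    have h3 : b ^ 3 < x ^ 3 := pow_lt_pow_left₀ h hbp.le (by norm_num)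
    have h2 : b ^ 2 < x ^ 2 := pow_lt_pow_left₀ h hbp.le (by norm_num)
    linarith
  · exact h
  · exfalso
    have h5 : x ^ 5 < b ^ 5 := pow_lt_pow_left₀ h hxp.le (by norm_num)
    have h4 : x ^ 4 < b ^ 4 := pow_lt_pow_left₀ h hxp.le (by norm_num)
    have h3 : x ^ 3 < b ^ 3 := pow_lt_pow_left₀ h hxp.le (by norm_num)
    have h2 : x ^ 2 < b ^ 2 := pow_lt_pow_left₀ h hxp.le (by norm_num)
    linarith

/-- For real `0 < t < 1`, the quintic `Q_t` has exactly one real root; consequently, whenever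
`Q_t` is irreducible over a real subfield `K` containing `t`, the `5` complex roots of `Q_t`
are distinct and complex conjugation permutes them as a product of two transpositions (an
involution `≠ 1` with exactly one fixed point). -/
theorem stmt_13 (t : ℝ) (h0 : 0 < t) (h1 : t < 1) :
    (∃! x : ℝ,
      x ^ 5 + 10 * x ^ 4 + 35 * x ^ 3 + 50 * x ^ 2 + 25 * x + 4 - 4 * (t ^ 5)⁻¹ = 0) ∧
    ∀ (K : Subfield ℝ), t ∈ K → ∀ q : K, ((q : ℝ) = 4 - 4 * (t ^ 5)⁻¹) →
      ∀ Q : Polynomial K,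
        Q = X ^ 5 + C 10 * X ^ 4 + C 35 * X ^ 3 + C 50 * X ^ 2 + C 25 * X + C q →
        Irreducible Q →
        ∀ R : Finset ℂ,
          R = ((Q.map K.subtype).map Complex.ofRealHom).roots.toFinset →
          R.card = 5 ∧
          ∃ σ : Equiv.Perm {z : ℂ // z ∈ R},
            (∀ z, (σ z : ℂ) = (starRingEnd ℂ) (z : ℂ)) ∧
            σ ≠ 1 ∧ σ * σ = 1 ∧
            Nat.card {z : {z : ℂ // z ∈ R} | σ z = z} = 1 := by
  obtain ⟨c, hcdef⟩ : ∃ c : ℝ, c = 4 - 4 * (t ^ 5)⁻¹ := ⟨_, rfl⟩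
  have ht5 : 0 < t ^ 5 := pow_pos h0 5
  have ht5' : t ^ 5 < 1 := pow_lt_one₀ h0.le h1 (by norm_num)
  have hinv : 1 < (t ^ 5)⁻¹ := (one_lt_inv₀ ht5).mpr ht5'
  have hc : c < 0 := by rw [hcdef]; linarith
  obtain ⟨r, hr, hruniq⟩ := aux_unique_root c hc
  constructor
  · refine ⟨r, by linarith [hr], ?_⟩
    intro y hy
    exact hruniq y (by linarith [hy])
  intro K htK q hq Q hQ hirr R hR
  rw [← hcdef] at hq
  set P2 : Polynomial ℂ := (Q.map K.subtype).map Complex.ofRealHom with hP2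
  have h10 : (((10:K):ℝ):ℂ) = 10 := by norm_cast
  have h35 : (((35:K):ℝ):ℂ) = 35 := by norm_cast
  have h50 : (((50:K):ℝ):ℂ) = 50 := by norm_cast
  have h25 : (((25:K):ℝ):ℂ) = 25 := by norm_cast
  have hP2eq : P2 = X ^ 5 + C 10 * X ^ 4 + C 35 * X ^ 3 + C 50 * X ^ 2 + C 25 * X
      + C ((c : ℝ) : ℂ) := by
    simp only [hP2, hQ, Polynomial.map_add, Polynomial.map_mul, Polynomial.map_pow, map_C, map_X]
    rw [show (Complex.ofRealHom (K.subtype 10)) = 10 from h10,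
      show (Complex.ofRealHom (K.subtype 35)) = 35 from h35,
      show (Complex.ofRealHom (K.subtype 50)) = 50 from h50,
      show (Complex.ofRealHom (K.subtype 25)) = 25 from h25,
      show (K.subtype q) = c from hq]
    simp
  have hsep : P2.Separable := ((hirr.separable).map).map
  have hdeg : P2.natDegree = 5 := by
    rw [hP2eq]; compute_degree!
  have hne : P2 ≠ 0 := by
    intro h; rw [h] at hdeg; simp at hdeg
  have hmem : ∀ z : ℂ, z ∈ R ↔
      z ^ 5 + 10 * z ^ 4 + 35 * z ^ 3 + 50 * z ^ 2 + 25 * z + (c:ℂ) = 0 := by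
    intro z
    rw [hR, Multiset.mem_toFinset, Polynomial.mem_roots hne, Polynomial.IsRoot, hP2eq]
    simp
  have hcard : R.card = 5 := by
    rw [hR, Multiset.toFinset_card_of_nodup (Polynomial.nodup_roots hsep),
      Polynomial.splits_iff_card_roots.mp (IsAlgClosed.splits P2), hdeg]
  refine ⟨hcard, ?_⟩
  -- real root is in R
  have hrR : (r : ℂ) ∈ R := by
    rw [hmem]
    have : ((r ^ 5 + 10 * r ^ 4 + 35 * r ^ 3 + 50 * r ^ 2 + 25 * r + c : ℝ) : ℂ) = 0 := by
      rw [hr]; norm_num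
    push_cast at this
    linear_combination this
  -- fixed complex roots are equal to r
  have hfix : ∀ z : ℂ, z ∈ R → (starRingEnd ℂ) z = z → z = (r : ℂ) := by
    intro z hz hconj
    have him : z.im = 0 := Complex.conj_eq_iff_im.mp hconj
    have hre : z = ((z.re : ℝ) : ℂ) := by
      exact (Complex.conj_eq_iff_re.mp hconj).symm
    rw [hmem] at hz
    rw [hre] at hz
    have : ((z.re ^ 5 + 10 * z.re ^ 4 + 35 * z.re ^ 3 + 50 * z.re ^ 2 + 25 * z.re + c : ℝ) : ℂ)
        = 0 := by push_cast; linear_combination hz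
    have hzr : z.re ^ 5 + 10 * z.re ^ 4 + 35 * z.re ^ 3 + 50 * z.re ^ 2 + 25 * z.re + c = 0 :=
      by exact_mod_cast this
    rw [hre, hruniq z.re hzr]
  -- conjugation preserves R
  have hconjmem : ∀ z : ℂ, z ∈ R → (starRingEnd ℂ) z ∈ R := by
    intro z hz
    rw [hmem] at hz ⊢
    have h2 := congrArg (starRingEnd ℂ) hz
    simp only [map_add, map_mul, map_pow, map_ofNat, Complex.conj_ofReal, map_zero] at h2
    exact h2
  have hinvol : Function.Involutive
      (fun z : {z : ℂ // z ∈ R} => (⟨(starRingEnd ℂ) z, hconjmem z z.2⟩ : {z : ℂ // z ∈ R})) := by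
    intro z
    ext
    exact Complex.conj_conj _
  set σ : Equiv.Perm {z : ℂ // z ∈ R} := hinvol.toPerm _ with hσ
  have hσapp : ∀ z : {z : ℂ // z ∈ R}, (σ z : ℂ) = (starRingEnd ℂ) (z : ℂ) := fun z => rfl
  refine ⟨σ, hσapp, ?_, ?_, ?_⟩
  · -- σ ≠ 1 : some root differs from r
    have : ∃ z ∈ R, z ≠ (r : ℂ) := by
      by_contra h
      push_neg at h
      have : R ⊆ {(r : ℂ)} := fun z hz => Finset.mem_singleton.mpr (h z hz)
      have := Finset.card_le_card this
      rw [hcard] at this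
      simp at this
    obtain ⟨z, hz, hzr⟩ := this
    intro hcon
    have : σ ⟨z, hz⟩ = ⟨z, hz⟩ := by rw [hcon]; rfl
    have hcz : (starRingEnd ℂ) z = z := by
      have := congrArg (Subtype.val) this
      simpa [hσapp] using this
    exact hzr (hfix z hz hcz)
  · ext z
    simp only [Equiv.Perm.mul_apply, Equiv.Perm.one_apply]
    exact congrArg Subtype.val (hinvol z)
  · have hset : {z : {z : ℂ // z ∈ R} | σ z = z} = {⟨(r : ℂ), hrR⟩} := by
      ext z
      simp only [Set.mem_setOf_eq, Set.mem_singleton_iff]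
      constructor
      · intro hz
        have hcz : (starRingEnd ℂ) (z : ℂ) = z := by
          have := congrArg (Subtype.val) hz
          simpa [hσapp] using this
        exact Subtype.ext (hfix z z.2 hcz)
      · intro hz
        apply Subtype.ext
        rw [hz]
        simp only [hσapp]
        exact Complex.conj_ofReal _
    rw [hset, Nat.card_coe_set_eq, Set.ncard_singleton]
end

section
/- Over a finite field k of odd cardinality q with q a power of a prime p ∉ {2,5,7}, for t ∈ k with t^7 ≠ 1: the number of points of Z_t = {(x_1,...,x_6) ∈ (k^×)^6 : x_1+⋯+x_6 + (x_1⋯x_6)^{-1} = 7t} satisfies #Z_t(k) ≡ #{(x,y) ∈ (k^×)^2 : 4x + 2y + x^{-4} y^{-2} - 7t = 0} mod 2. -/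
open MulAction in
/-- Parity of a finite type is the parity of the fixed set of any involution on it. -/
lemma invol_parity {α : Type*} [Finite α] {f : α → α} (hf : Function.Involutive f) :
    Nat.card α ≡ Nat.card {x : α // f x = x} [MOD 2] := by
  classical
  let g : Equiv.Perm α := Function.Involutive.toPerm f hf
  have hg2 : g ^ 2 = 1 := by
    ext x
    simp [g, sq, hf x]
  have hP : IsPGroup 2 (Subgroup.zpowers g) := by
    intro h
    refine ⟨1, ?_⟩
    obtain ⟨n, hn⟩ := h.2
    have : ((h : Equiv.Perm α)) ^ (2 : ℕ) ^ 1 = 1 := by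
      rw [← hn, pow_one, ← zpow_natCast, ← zpow_mul, mul_comm, zpow_mul, zpow_natCast, hg2,
        one_zpow]
    exact Subtype.ext (by push_cast; exact this)
  have key := hP.card_modEq_card_fixedPoints α
  refine key.trans ?_
  have : Nat.card (fixedPoints (Subgroup.zpowers g) α) = Nat.card {x : α // f x = x} := by
    apply Nat.card_congr
    apply Equiv.subtypeEquivRight
    intro x
    rw [mem_fixedPoints]
    constructor
    · intro h
      have := h ⟨g, Subgroup.mem_zpowers g⟩
      simpa [g] using this
    · intro h u
      obtain ⟨n, hn⟩ := u.2
      have hfix : Function.IsFixedPt g x := by exact h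
      have := Function.IsFixedPt.perm_zpow hfix n
      have hux : (u : Equiv.Perm α) x = x := by rw [← hn]; exact this
      simpa [Subgroup.smul_def, Equiv.Perm.smul_def] using hux
  rw [this]


lemma set_parity {α : Type*} [Finite α] (A : Set α) (r : α → α) (hr : Function.Involutive r)
    (hA : ∀ x ∈ A, r x ∈ A) :
    Nat.card A ≡ Nat.card {x | x ∈ A ∧ r x = x} [MOD 2] := by
  let f : A → A := fun y => ⟨r y, hA y y.2⟩
  have hf : Function.Involutive f := fun y => Subtype.ext (hr y)
  refine (invol_parity hf).trans ?_
  have : Nat.card {y : A // f y = y} = Nat.card {x | x ∈ A ∧ r x = x} := by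
    apply Nat.card_congr
    exact { toFun := fun y => ⟨y.1.1, y.1.2, congrArg Subtype.val y.2⟩
            invFun := fun x => ⟨⟨x.1, x.2.1⟩, Subtype.ext x.2.2⟩
            left_inv := fun y => by ext; rfl
            right_inv := fun x => rfl }
  rw [this]

lemma cons_val_five' {α : Type*} (a b c d e f : α) :
    (![a, b, c, d, e, f] : Fin 6 → α) 5 = f := rfl


/-- Over a finite field `k` of odd cardinality with characteristic not `2, 5, 7`, and `t ∈ k`
with `t⁷ ≠ 1`, the number of points of `Z_t : x₁+⋯+x₆+(x₁⋯x₆)⁻¹ = 7t` in `(k^×)⁶` is congruent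
mod 2 to the number of points of the plane curve `4x + 2y + x⁻⁴y⁻² - 7t = 0` in `(k^×)²`. -/
theorem stmt_16 (k : Type*) [Field k] [Fintype k] (hq : Odd (Fintype.card k))
    (h2 : ringChar k ≠ 2) (h5 : ringChar k ≠ 5) (h7 : ringChar k ≠ 7)
    (t : k) (ht : t ^ 7 ≠ 1) :
    Nat.card {x : Fin 6 → k | (∀ i, x i ≠ 0) ∧
        (∑ i, x i) + (∏ i, x i)⁻¹ = 7 * t} ≡
      Nat.card {p : k × k | p.1 ≠ 0 ∧ p.2 ≠ 0 ∧
        4 * p.1 + 2 * p.2 + (p.1 ^ 4 * p.2 ^ 2)⁻¹ - 7 * t = 0} [MOD 2] := by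
  classical
  set A : Set (Fin 6 → k) := {x : Fin 6 → k | (∀ i, x i ≠ 0) ∧
      (∑ i, x i) + (∏ i, x i)⁻¹ = 7 * t} with hAdef
  set r₁ : (Fin 6 → k) → (Fin 6 → k) := fun x => ![x 2, x 3, x 0, x 1, x 5, x 4] with hr₁def
  set r₂ : (Fin 6 → k) → (Fin 6 → k) := fun x => ![x 1, x 0, x 3, x 2, x 4, x 5] with hr₂def
  have hr₁ : Function.Involutive r₁ := by
    intro x; funext i; fin_cases i <;> simp [r₁, cons_val_five']
  have hr₂ : Function.Involutive r₂ := by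
    intro x; funext i; fin_cases i <;> simp [r₂, cons_val_five']
  have memA : ∀ x : Fin 6 → k, x ∈ A ↔ ((∀ i, x i ≠ 0) ∧
      (∑ i, x i) + (∏ i, x i)⁻¹ = 7 * t) := fun x => Iff.rfl
  have hA₁ : ∀ x ∈ A, r₁ x ∈ A := by
    intro x hx
    obtain ⟨hne, heq⟩ := hx
    refine ⟨fun i => by fin_cases i <;> simpa [r₁, cons_val_five'] using hne _, ?_⟩
    have hs : ∑ i, r₁ x i = ∑ i, x i := by
      simp only [Fin.sum_univ_six, r₁, Matrix.cons_val_zero, Matrix.cons_val_one, Matrix.head_cons, Matrix.cons_val_two, Matrix.cons_val_three, Matrix.cons_val_four, cons_val_five', Matrix.tail_cons]; ring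
    have hp : ∏ i, r₁ x i = ∏ i, x i := by
      simp only [Fin.prod_univ_six, r₁, Matrix.cons_val_zero, Matrix.cons_val_one, Matrix.head_cons, Matrix.cons_val_two, Matrix.cons_val_three, Matrix.cons_val_four, cons_val_five', Matrix.tail_cons]; ring
    rw [hs, hp]; exact heq
  have hA₂ : ∀ x ∈ A, r₂ x ∈ A := by
    intro x hx
    obtain ⟨hne, heq⟩ := hx
    refine ⟨fun i => by fin_cases i <;> simpa [r₂, cons_val_five'] using hne _, ?_⟩
    have hs : ∑ i, r₂ x i = ∑ i, x i := by
      simp only [Fin.sum_univ_six, r₂, Matrix.cons_val_zero, Matrix.cons_val_one, Matrix.head_cons, Matrix.cons_val_two, Matrix.cons_val_three, Matrix.cons_val_four, cons_val_five', Matrix.tail_cons]; ring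
    have hp : ∏ i, r₂ x i = ∏ i, x i := by
      simp only [Fin.prod_univ_six, r₂, Matrix.cons_val_zero, Matrix.cons_val_one, Matrix.head_cons, Matrix.cons_val_two, Matrix.cons_val_three, Matrix.cons_val_four, cons_val_five', Matrix.tail_cons]; ring
    rw [hs, hp]; exact heq
  set B : Set (Fin 6 → k) := {x | x ∈ A ∧ r₁ x = x} with hBdef
  have hB₂ : ∀ x ∈ B, r₂ x ∈ B := by
    intro x hx
    obtain ⟨hxA, hx1⟩ := hx
    have e20 : x 2 = x 0 := by have := congrFun hx1 0; simpa [r₁, cons_val_five'] using this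
    have e31 : x 3 = x 1 := by have := congrFun hx1 1; simpa [r₁, cons_val_five'] using this
    have e54 : x 5 = x 4 := by have := congrFun hx1 4; simpa [r₁, cons_val_five'] using this
    refine ⟨hA₂ x hxA, ?_⟩
    funext i
    fin_cases i <;> simp [r₁, r₂, cons_val_five', e20, e31, e54]
  have step1 := set_parity A r₁ hr₁ hA₁
  have step2 := set_parity B r₂ hr₂ hB₂
  refine step1.trans (step2.trans ?_)
  have e : {x | x ∈ B ∧ r₂ x = x} ≃ {p : k × k | p.1 ≠ 0 ∧ p.2 ≠ 0 ∧
      4 * p.1 + 2 * p.2 + (p.1 ^ 4 * p.2 ^ 2)⁻¹ - 7 * t = 0} := by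
    refine
      { toFun := fun x => ⟨(x.1 0, x.1 4), ?_⟩
        invFun := fun p => ⟨![p.1.1, p.1.1, p.1.1, p.1.1, p.1.2, p.1.2], ?_⟩
        left_inv := ?_
        right_inv := ?_ }
    · obtain ⟨v, ⟨⟨hne, heq⟩, hx1⟩, hx2⟩ := x
      have e20 : v 2 = v 0 := by have := congrFun hx1 0; simpa [r₁, cons_val_five'] using this
      have e31 : v 3 = v 1 := by have := congrFun hx1 1; simpa [r₁, cons_val_five'] using this
      have e54 : v 5 = v 4 := by have := congrFun hx1 4; simpa [r₁, cons_val_five'] using this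
      have e10 : v 1 = v 0 := by have := congrFun hx2 0; simpa [r₂, cons_val_five'] using this
      refine ⟨hne 0, hne 4, ?_⟩
      rw [Fin.sum_univ_six, Fin.prod_univ_six, e20, e31, e54, e10] at heq
      rw [sub_eq_zero]
      have hpr : v 0 * v 0 * v 0 * v 0 * v 4 * v 4 = v 0 ^ 4 * v 4 ^ 2 := by ring
      rw [hpr] at heq
      linear_combination heq
    · obtain ⟨⟨a, b⟩, ha, hb, hcurve⟩ := p
      have key : 4 * a + 2 * b + (a ^ 4 * b ^ 2)⁻¹ = 7 * t := by
        rw [← sub_eq_zero]; linear_combination hcurve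
      refine ⟨⟨⟨fun i => by fin_cases i <;> first | exact ha | exact hb, ?_⟩, ?_⟩, ?_⟩
      · rw [Fin.sum_univ_six, Fin.prod_univ_six]
        simp only [Matrix.cons_val_zero, Matrix.cons_val_one, Matrix.head_cons,
          Matrix.cons_val_two, Matrix.cons_val_three, Matrix.cons_val_four, cons_val_five',
          Matrix.head_fin_const, Matrix.tail_cons]
        rw [show (a*a*a*a*b*b)⁻¹ = (a ^ 4 * b ^ 2)⁻¹ by norm_num; ring_nf]
        linear_combination key
      · funext i; fin_cases i <;> simp [r₁, cons_val_five']
      · funext i; fin_cases i <;> simp [r₂, cons_val_five']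
    · rintro ⟨v, ⟨⟨hne, heq⟩, hx1⟩, hx2⟩
      have e20 : v 2 = v 0 := by have := congrFun hx1 0; simpa [r₁, cons_val_five'] using this
      have e31 : v 3 = v 1 := by have := congrFun hx1 1; simpa [r₁, cons_val_five'] using this
      have e54 : v 5 = v 4 := by have := congrFun hx1 4; simpa [r₁, cons_val_five'] using this
      have e10 : v 1 = v 0 := by have := congrFun hx2 0; simpa [r₂, cons_val_five'] using this
      apply Subtype.ext
      funext i
      fin_cases i <;> simp [cons_val_five', e20, e31, e54, e10]
    · rintro ⟨⟨a, b⟩, hp⟩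
      rfl
  rw [Nat.card_congr e]
end
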